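/- arXiv:1901.03514 — 3 statements merged into one kernel-verified Lean document; each statement's English description precedes it below -/
import Mathlib

section
/- Let (μ_j) be a sequence of nonnegative Borel (Radon) measures on ℝ^n with limsup_{j→∞} μ_j(closedBall 0 1) = +∞ (in particular the total masses on the closed unit ball tend to infinity along a subsequence). Define Z := { x ∈ ℝ^n : for every r > 0, limsup_{j→∞} μ_j(ball x r) = +∞ }. Then Z ∩ closedBall 0 1 ≠ ∅. -/
/-! If every point of the closed unit ball had a neighbourhood of eventually bounded mass,
finitely many of these neighbourhoods would cover the ball by compactness, and the masses of
the ball would be eventually bounded by the sum of the bounds, contradicting the blow-up. -/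

open MeasureTheory Metric Filter
open scoped ENNReal Topology

theorem ENNReal.limsup_lt_top_iff_exists_eventually_le {ι : Type*} {l : Filter ι}
    {u : ι → ℝ≥0∞} : limsup u l < ∞ ↔ ∃ C ≠ ∞, ∀ᶠ j in l, u j ≤ C := by
  constructor
  · intro h
    refine ⟨limsup u l + 1, ENNReal.add_ne_top.2 ⟨h.ne, ENNReal.one_ne_top⟩, ?_⟩
    exact (eventually_lt_of_limsup_lt (ENNReal.lt_add_right h.ne one_ne_zero)).mono
      fun _ hj => hj.le
  · rintro ⟨C, hC, hle⟩
    exact (limsup_le_of_le (by isBoundedDefault) hle).trans_lt hC.lt_top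

theorem IsCompact.limsup_measure_lt_top {X ι : Type*} [TopologicalSpace X] [MeasurableSpace X]
    {l : Filter ι} {μ : ι → Measure X} {K : Set X} (hK : IsCompact K)
    (hlocal : ∀ x ∈ K, ∃ U ∈ 𝓝 x, limsup (fun j => μ j U) l < ∞) :
    limsup (fun j => μ j K) l < ∞ := by
  simp only [ENNReal.limsup_lt_top_iff_exists_eventually_le] at hlocal ⊢
  refine hK.induction_on ?empty ?mono ?union ?nhds
  case empty => exact ⟨0, ENNReal.zero_ne_top, Eventually.of_forall fun j => (measure_empty).le⟩
  case mono =>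
    rintro s t hst ⟨C, hC, hle⟩
    exact ⟨C, hC, hle.mono fun j hj => (measure_mono hst).trans hj⟩
  case union =>
    rintro s t ⟨C, hC, hsle⟩ ⟨D, hD, htle⟩
    refine ⟨C + D, ENNReal.add_ne_top.2 ⟨hC, hD⟩, ?_⟩
    filter_upwards [hsle, htle] with j hsj htj
    exact (measure_union_le _ _).trans (add_le_add hsj htj)
  case nhds =>
    intro x hx
    obtain ⟨U, hU, hbound⟩ := hlocal x hx
    exact ⟨U, mem_nhdsWithin_of_mem_nhds hU, hbound⟩

theorem blowup_set_nonempty_general {n : ℕ}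
    (μ : ℕ → Measure (EuclideanSpace ℝ (Fin n)))
    (hblow : Filter.limsup (fun j => μ j (closedBall (0 : EuclideanSpace ℝ (Fin n)) 1))
      atTop = ⊤) :
    ({x : EuclideanSpace ℝ (Fin n) |
        ∀ r > (0 : ℝ), Filter.limsup (fun j => μ j (ball x r)) atTop = ⊤} ∩
      closedBall (0 : EuclideanSpace ℝ (Fin n)) 1).Nonempty := by
  by_contra hempty
  have hlocal : ∀ x ∈ closedBall (0 : EuclideanSpace ℝ (Fin n)) 1,
      ∃ U ∈ 𝓝 x, limsup (fun j => μ j U) atTop < ∞ := by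
    intro x hx
    obtain ⟨r, hr, hfinite⟩ : ∃ r > (0 : ℝ), limsup (fun j => μ j (ball x r)) atTop ≠ ⊤ := by
      by_contra! h
      exact hempty ⟨x, h, hx⟩
    exact ⟨ball x r, ball_mem_nhds x hr, hfinite.lt_top⟩
  exact ((isCompact_closedBall 0 1).limsup_measure_lt_top hlocal).ne hblow

/-- If the masses of a sequence of Radon measures blow up on the closed unit
ball, then the mass blow-up set meets the closed unit ball. -/
theorem blowup_set_nonempty {n : ℕ}
    (μ : ℕ → Measure (EuclideanSpace ℝ (Fin n)))
    (hfin : ∀ j, IsFiniteMeasureOnCompacts (μ j))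
    (hblow : Filter.limsup (fun j => μ j (closedBall (0 : EuclideanSpace ℝ (Fin n)) 1))
      atTop = ⊤) :
    ({x : EuclideanSpace ℝ (Fin n) |
        ∀ r > (0 : ℝ), Filter.limsup (fun j => μ j (ball x r)) atTop = ⊤} ∩
      closedBall (0 : EuclideanSpace ℝ (Fin n)) 1).Nonempty :=
  blowup_set_nonempty_general μ hblow
end

section
/- Let f : ℝ^n → ℝ be continuous with f(0) = 0, f(x) < 0 for all x in a closed set Z ∖ {0} with 0 ∈ Z, and suppose the superlevel sets {f ≥ a} are compact for all a ∈ ℝ. Fix M ≥ sup{|f(x)| + |∇f(x)| : x ∈ closedBall(0, 2r)} (f being C¹ there). For λ > 0 set g_λ(x,y) := f(y) − λ|x − y|⁴ and let (x_λ, y_λ) ∈ Z × ℝ^n be a maximizer of g_λ over Z × ℝ^n. Then |x_λ − y_λ|⁴ ≤ M/λ, and x_λ → 0 and y_λ → 0 as λ → ∞. -/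
/-!
Testing the maximality of `(x_λ, y_λ)` against `(0, 0)` gives `λ‖x_λ - y_λ‖⁴ ≤ f(y_λ)`. So
`f(y_λ) ≥ 0`, which keeps `y_λ` in `ball 0 r`, where `f ≤ M`; this gives the bound, and with it
`x_λ - y_λ → 0`. A cluster point of `y_λ` is then also one of `x_λ ∈ Z`, hence lies in
`Z ∩ {f ≥ 0} = {0}`; compactness of `{f ≥ 0}` gives `y_λ → 0`, and so `x_λ → 0`.
-/

open Filter Metric Topology

theorem tendsto_zero_of_pow_le {ι : Type*} {l : Filter ι} {u v : ι → ℝ} {k : ℕ} (hk : k ≠ 0)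
    (hu : ∀ i, 0 ≤ u i) (hle : ∀ᶠ i in l, u i ^ k ≤ v i) (hv : Tendsto v l (𝓝 0)) :
    Tendsto u l (𝓝 0) := by
  have hpow : Tendsto (fun i => u i ^ k) l (𝓝 0) :=
    squeeze_zero' (Eventually.of_forall fun i => pow_nonneg (hu i) k) hle hv
  have hroot := hpow.rpow_const (p := (k : ℝ)⁻¹) (Or.inr (by positivity))
  rw [Real.zero_rpow (by positivity)] at hroot
  simpa only [Real.pow_rpow_inv_natCast (hu _) hk] using hroot

theorem MapClusterPt.of_tendsto_sub {ι E : Type*} [SeminormedAddCommGroup E] {l : Filter ι}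
    {x y : ι → E} {p : E} (hy : MapClusterPt p l y)
    (hxy : Tendsto (fun i => x i - y i) l (𝓝 0)) : MapClusterPt p l x := by
  rw [nhds_basis_ball.mapClusterPt_iff_frequently] at hy ⊢
  intro ε hε
  have hclose : ∀ᶠ i in l, ‖x i - y i‖ < ε / 2 :=
    (tendsto_zero_iff_norm_tendsto_zero.1 hxy).eventually (gt_mem_nhds (half_pos hε))
  refine ((hy (ε / 2) (half_pos hε)).and_eventually hclose).mono fun i ⟨hyi, hxyi⟩ => ?_
  rw [mem_ball, dist_eq_norm] at hyi ⊢
  calc ‖x i - p‖ = ‖(x i - y i) + (y i - p)‖ := by rw [sub_add_sub_cancel]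
    _ ≤ ‖x i - y i‖ + ‖y i - p‖ := norm_add_le _ _
    _ < ε := by linarith

theorem tendsto_of_tendsto_sub_of_mem_inter_eq {ι E : Type*} [SeminormedAddCommGroup E]
    {l : Filter ι} {x y : ι → E} {Z K : Set E} {a : E} (hZ : IsClosed Z) (hK : IsCompact K)
    (hx : ∀ᶠ i in l, x i ∈ Z) (hy : ∀ᶠ i in l, y i ∈ K)
    (hxy : Tendsto (fun i => x i - y i) l (𝓝 0)) (ha : ∀ p ∈ Z, p ∈ K → p = a) :
    Tendsto y l (𝓝 a) :=
  hK.tendsto_nhds_of_unique_mapClusterPt hy fun p hpK hp =>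
    ha p (hZ.mem_of_mapClusterPt (hp.of_tendsto_sub hxy) hx) hpK

theorem mul_norm_sub_pow_le_of_forall_le {E : Type*} [SeminormedAddCommGroup E] {f : E → ℝ}
    {Z : Set E} (h0Z : 0 ∈ Z) (hf0 : f 0 = 0) {k : ℕ} (hk : k ≠ 0) {l : ℝ} {x y : E}
    (hmax : ∀ x' ∈ Z, ∀ y', f y' - l * ‖x' - y'‖ ^ k ≤ f y - l * ‖x - y‖ ^ k) :
    l * ‖x - y‖ ^ k ≤ f y := by
  have := hmax 0 h0Z 0
  rw [sub_zero, norm_zero, zero_pow hk, mul_zero, hf0] at this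
  linarith

theorem doubling_of_variables_general {n : ℕ}
    (f : EuclideanSpace ℝ (Fin n) → ℝ)
    (Z : Set (EuclideanSpace ℝ (Fin n))) (hZ : IsClosed Z)
    (h0Z : (0 : EuclideanSpace ℝ (Fin n)) ∈ Z) (hf0 : f 0 = 0)
    (hneg : ∀ x ∈ Z, x ≠ 0 → f x < 0)
    (hcompact : ∀ a : ℝ, IsCompact {x : EuclideanSpace ℝ (Fin n) | a ≤ f x})
    (r δ M : ℝ) (hδ : 0 < δ)
    (hout : ∀ x : EuclideanSpace ℝ (Fin n), x ∉ ball (0 : EuclideanSpace ℝ (Fin n)) r →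
      f x < -δ)
    (hM : ∀ x ∈ closedBall (0 : EuclideanSpace ℝ (Fin n)) (2 * r),
      |f x| + ‖gradient f x‖ ≤ M)
    (x y : ℝ → EuclideanSpace ℝ (Fin n))
    (hxZ : ∀ l : ℝ, 0 < l → x l ∈ Z)
    (hmaximizer : ∀ l : ℝ, 0 < l → ∀ x' ∈ Z, ∀ y' : EuclideanSpace ℝ (Fin n),
      f y' - l * ‖x' - y'‖ ^ 4 ≤ f (y l) - l * ‖x l - y l‖ ^ 4) :
    (∀ l : ℝ, 0 < l → ‖x l - y l‖ ^ 4 ≤ M / l) ∧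
    Tendsto x atTop (nhds 0) ∧ Tendsto y atTop (nhds 0) := by
  have hpen l (hl : 0 < l) : l * ‖x l - y l‖ ^ 4 ≤ f (y l) :=
    mul_norm_sub_pow_le_of_forall_le h0Z hf0 four_ne_zero (hmaximizer l hl)
  have hfy l (hl : 0 < l) : 0 ≤ f (y l) := (mul_nonneg hl.le (by positivity)).trans (hpen l hl)
  have hfyM l (hl : 0 < l) : f (y l) ≤ M := by
    have hyr : y l ∈ ball 0 r := by_contra fun h => by linarith [hout _ h, hfy l hl]
    have hy2r : y l ∈ closedBall 0 (2 * r) := by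
      rw [mem_ball_zero_iff] at hyr
      rw [mem_closedBall_zero_iff]
      linarith [norm_nonneg (y l)]
    linarith [le_abs_self (f (y l)), norm_nonneg (gradient f (y l)), hM _ hy2r]
  have hbound l (hl : 0 < l) : ‖x l - y l‖ ^ 4 ≤ M / l := by
    rw [le_div_iff₀ hl, mul_comm]
    exact (hpen l hl).trans (hfyM l hl)
  have hxy : Tendsto (fun l => x l - y l) atTop (𝓝 0) :=
    tendsto_zero_iff_norm_tendsto_zero.2 <| tendsto_zero_of_pow_le four_ne_zero
      (fun _ => norm_nonneg _) ((eventually_gt_atTop 0).mono hbound)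
      (tendsto_const_nhds.div_atTop tendsto_id)
  have hy : Tendsto y atTop (𝓝 0) :=
    tendsto_of_tendsto_sub_of_mem_inter_eq hZ (hcompact 0) ((eventually_gt_atTop 0).mono hxZ)
      ((eventually_gt_atTop 0).mono hfy) hxy
      fun p hpZ hpf => by_contra fun hp => (hneg p hpZ hp).not_ge hpf
  exact ⟨hbound, by simpa using hy.add hxy, hy⟩

/-- The doubling-of-variables construction in the proof of Proposition 3.1:
maximizers `(x_λ, y_λ)` of `g_λ(x,y) = f(y) − λ|x−y|⁴` over `Z × ℝⁿ` satisfy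
`|x_λ − y_λ|⁴ ≤ M/λ` and converge to `0` as `λ → ∞`. -/
theorem doubling_of_variables {n : ℕ}
    (f : EuclideanSpace ℝ (Fin n) → ℝ) (hf : Differentiable ℝ f)
    (Z : Set (EuclideanSpace ℝ (Fin n))) (hZ : IsClosed Z)
    (h0Z : (0 : EuclideanSpace ℝ (Fin n)) ∈ Z) (hf0 : f 0 = 0)
    (hneg : ∀ x ∈ Z, x ≠ 0 → f x < 0)
    (hcompact : ∀ a : ℝ, IsCompact {x : EuclideanSpace ℝ (Fin n) | a ≤ f x})
    (r δ M : ℝ) (hr : 0 < r) (hδ : 0 < δ)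
    (hout : ∀ x : EuclideanSpace ℝ (Fin n), x ∉ ball (0 : EuclideanSpace ℝ (Fin n)) r →
      f x < -δ)
    (hM : ∀ x ∈ closedBall (0 : EuclideanSpace ℝ (Fin n)) (2 * r),
      |f x| + ‖gradient f x‖ ≤ M)
    (x y : ℝ → EuclideanSpace ℝ (Fin n))
    (hxZ : ∀ l : ℝ, 0 < l → x l ∈ Z)
    (hmaximizer : ∀ l : ℝ, 0 < l → ∀ x' ∈ Z, ∀ y' : EuclideanSpace ℝ (Fin n),
      f y' - l * ‖x' - y'‖ ^ 4 ≤ f (y l) - l * ‖x l - y l‖ ^ 4) :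
    (∀ l : ℝ, 0 < l → ‖x l - y l‖ ^ 4 ≤ M / l) ∧
    Tendsto x atTop (nhds 0) ∧ Tendsto y atTop (nhds 0) :=
  doubling_of_variables_general f Z hZ h0Z hf0 hneg hcompact r δ M hδ hout hM x y hxZ hmaximizer
end

section
/- Let Z ⊂ ℝ^{m+1} be contained in the wedge W := { (x, x_{m+1}) ∈ ℝ^m × ℝ : x_{m+1} ≥ ⟨a, x⟩ + c|x_m| } for some a ∈ ℝ^m and c > 0, with 0 ∈ Z. Set T := 4(1 + |a|)/c' where c' = min(c, 1/4), and for ε > 0 define f(x, x_{m+1}) := −x_{m+1} + ⟨a, x⟩ + (c'/(2T))(x_m² − ε(|x|² + x_{m+1}²)). Then: (a) f ≤ −2(1+|a|) on W ∩ {|x_m| = T}; (b) for ε sufficiently small, f(z) > −(3/2)(1+|a|) for all z in the closed unit ball; (c) consequently f restricted to Z ∩ closedBall(0,1) ≠ ∅ implies f|_Z attains a local maximum at some point p with |p_m| < T. -/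
open scoped InnerProductSpace

lemma coord_abs_le_norm {m : ℕ} (x : EuclideanSpace ℝ (Fin m)) (i : Fin m) :
    |x i| ≤ ‖x‖ := by
  have h : ‖x i‖ ^ 2 ≤ ∑ j, ‖x j‖ ^ 2 :=
    Finset.single_le_sum (fun j _ => sq_nonneg ‖x j‖) (Finset.mem_univ i)
  rw [← PiLp.norm_sq_eq_of_L2] at h
  have h0 : (0:ℝ) ≤ ‖x i‖ := norm_nonneg _
  have h1 : (0:ℝ) ≤ ‖x‖ := norm_nonneg _
  have : ‖x i‖ ≤ ‖x‖ := by nlinarith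
  simpa using this

set_option maxHeartbeats 1000000 in
/-- The barrier construction in Step 1 of Proposition 4.3: for a closed set `Z`
containing `0` and contained in the wedge
`W = {(x, x_{m+1}) : x_{m+1} ≥ ⟨a,x⟩ + c|x_m|}`, the quadratic barrier
`f_ε(x,x_{m+1}) = −x_{m+1} + ⟨a,x⟩ + (c'/2T)(x_m² − ε(|x|² + x_{m+1}²))`
satisfies: (a) `f_ε ≤ −2(1+|a|)` on `W ∩ {|x_m| = T}`; (b) for `ε` small,
`f_ε > −(3/2)(1+|a|)` on the closed unit ball; (c) hence if `Z` meets the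
closed unit ball, `f_ε|_Z` attains a local maximum at a point `p` with
`|p_m| < T`. -/
theorem wedge_barrier {m : ℕ} (hm : 0 < m) (jm : Fin m) (hjm : (jm : ℕ) = m - 1)
    (a : EuclideanSpace ℝ (Fin m)) (c : ℝ) (hc : 0 < c)
    (Z W : Set (EuclideanSpace ℝ (Fin m) × ℝ))
    (hW : W = {z : EuclideanSpace ℝ (Fin m) × ℝ |
      ⟪a, z.1⟫_ℝ + c * |z.1 jm| ≤ z.2})
    (hZW : Z ⊆ W) (hZ : IsClosed Z)
    (h0Z : (0 : EuclideanSpace ℝ (Fin m) × ℝ) ∈ Z)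
    (c' T : ℝ) (hc' : c' = min c (1 / 4)) (hT : T = 4 * (1 + ‖a‖) / c')
    (f : ℝ → EuclideanSpace ℝ (Fin m) × ℝ → ℝ)
    (hf : ∀ ε z, f ε z = -z.2 + ⟪a, z.1⟫_ℝ +
      (c' / (2 * T)) * ((z.1 jm) ^ 2 - ε * (‖z.1‖ ^ 2 + z.2 ^ 2))) :
    (∀ ε : ℝ, 0 ≤ ε → ∀ z ∈ W, |z.1 jm| = T → f ε z ≤ -2 * (1 + ‖a‖)) ∧
    (∃ ε₀ > (0 : ℝ), ∀ ε : ℝ, 0 < ε → ε ≤ ε₀ →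
      ∀ z : EuclideanSpace ℝ (Fin m) × ℝ, ‖z.1‖ ^ 2 + z.2 ^ 2 ≤ 1 →
        -(3 / 2) * (1 + ‖a‖) < f ε z) ∧
    ((Z ∩ {z : EuclideanSpace ℝ (Fin m) × ℝ | ‖z.1‖ ^ 2 + z.2 ^ 2 ≤ 1}).Nonempty →
      ∃ ε > (0 : ℝ), ∃ p ∈ Z, IsLocalMaxOn (f ε) Z p ∧ |p.1 jm| < T) := by
  have hA : (1:ℝ) ≤ 1 + ‖a‖ := by linarith [norm_nonneg a]
  set A : ℝ := 1 + ‖a‖ with hAdef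
  have hc'0 : 0 < c' := by rw [hc']; exact lt_min hc (by norm_num)
  have hc'le : c' ≤ 1/4 := by rw [hc']; exact min_le_right _ _
  have hc'c : c' ≤ c := by rw [hc']; exact min_le_left _ _
  have hT0 : 0 < T := by rw [hT]; positivity
  set κ : ℝ := c' / (2 * T) with hκdef
  have hκ0 : 0 < κ := by positivity
  have hc'T : c' * T = 4 * A := by rw [hT]; field_simp
  have hκT : κ * T ^ 2 = 2 * A := by
    rw [hκdef, hT]; field_simp; ring
  have hκ8 : κ * (8 * A) = c' ^ 2 := by
    rw [hκdef, hT]; field_simp; ring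
  have hκsmall : κ < A / 2 := by nlinarith
  -- Part (a)
  have partA : ∀ ε : ℝ, 0 ≤ ε → ∀ z ∈ W, |z.1 jm| = T → f ε z ≤ -2 * A := by
    intro ε hε z hz hzm
    rw [hW] at hz
    have hzW : ⟪a, z.1⟫_ℝ + c * T ≤ z.2 := by rw [← hzm]; exact hz
    have hS : 0 ≤ ‖z.1‖ ^ 2 + z.2 ^ 2 := by positivity
    have hsq : (z.1 jm) ^ 2 = T ^ 2 := by rw [← sq_abs, hzm]
    rw [hf, hsq]
    have h1 : 0 ≤ κ * (ε * (‖z.1‖ ^ 2 + z.2 ^ 2)) :=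
      mul_nonneg hκ0.le (mul_nonneg hε hS)
    have h2 : c' * T ≤ c * T := mul_le_mul_of_nonneg_right hc'c hT0.le
    nlinarith
  -- Part (b)
  have partB : ∀ ε : ℝ, 0 < ε → ε ≤ 1 →
      ∀ z : EuclideanSpace ℝ (Fin m) × ℝ, ‖z.1‖ ^ 2 + z.2 ^ 2 ≤ 1 →
        -(3 / 2) * A < f ε z := by
    intro ε hε hε1 z hz
    have hS : 0 ≤ ‖z.1‖ ^ 2 + z.2 ^ 2 := by positivity
    have hz2 : z.2 ^ 2 ≤ 1 := by nlinarith [sq_nonneg ‖z.1‖]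
    have hz1 : ‖z.1‖ ^ 2 ≤ 1 := by nlinarith [sq_nonneg z.2]
    have hz2' : z.2 ≤ 1 := by nlinarith [sq_nonneg (z.2 - 1)]
    have hz1' : ‖z.1‖ ≤ 1 :=
      (pow_le_one_iff_of_nonneg (norm_nonneg z.1) two_ne_zero).mp hz1
    have hinner : -‖a‖ ≤ ⟪a, z.1⟫_ℝ := by
      have h := abs_real_inner_le_norm a z.1
      have h2 : ‖a‖ * ‖z.1‖ ≤ ‖a‖ * 1 :=
        mul_le_mul_of_nonneg_left hz1' (norm_nonneg a)
      have h3 := neg_abs_le ⟪a, z.1⟫_ℝ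
      linarith
    have hεS : ε * (‖z.1‖ ^ 2 + z.2 ^ 2) ≤ 1 := by
      have := mul_le_mul_of_nonneg_right hε1 hS
      linarith
    have hεS0 : 0 ≤ ε * (‖z.1‖ ^ 2 + z.2 ^ 2) := mul_nonneg hε.le hS
    have hterm : -κ ≤ κ * ((z.1 jm) ^ 2 - ε * (‖z.1‖ ^ 2 + z.2 ^ 2)) := by
      have h4 : (-1 : ℝ) ≤ (z.1 jm) ^ 2 - ε * (‖z.1‖ ^ 2 + z.2 ^ 2) := by
        linarith [sq_nonneg (z.1 jm)]
      have h5 := mul_le_mul_of_nonneg_left h4 hκ0.le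
      linarith [mul_neg_one κ]
    rw [hf]
    linarith
  refine ⟨partA, ⟨1, one_pos, partB⟩, ?_⟩
  -- Part (c)
  rintro ⟨q, hqZ, hqS⟩
  have hqS' : ‖q.1‖ ^ 2 + q.2 ^ 2 ≤ 1 := hqS
  refine ⟨1, one_pos, ?_⟩
  have hfq : -(3 / 2) * A < f 1 q := partB 1 one_pos le_rfl q hqS
  set R2 : ℝ := T ^ 2 + 4 * A / κ with hR2def
  have hκR2 : κ * R2 = κ * T ^ 2 + 4 * A := by
    rw [hR2def]; field_simp
  have hT1 : 1 ≤ T := by nlinarith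
  have hR2T : T ^ 2 ≤ R2 := by
    rw [hR2def]
    have : 0 ≤ 4 * A / κ := by positivity
    linarith
  have hR21 : 1 ≤ R2 := by
    rw [hR2def]
    have : 0 ≤ 4 * A / κ := by positivity
    nlinarith
  set C : Set (EuclideanSpace ℝ (Fin m) × ℝ) :=
    Z ∩ {z | |z.1 jm| ≤ T ∧ ‖z.1‖ ^ 2 + z.2 ^ 2 ≤ R2} with hCdef
  have hcoord : Continuous fun z : EuclideanSpace ℝ (Fin m) × ℝ => z.1 jm :=
    (EuclideanSpace.proj jm).continuous.comp continuous_fst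
  have hScont : Continuous fun z : EuclideanSpace ℝ (Fin m) × ℝ =>
      ‖z.1‖ ^ 2 + z.2 ^ 2 := by fun_prop
  have hCclosed : IsClosed C := by
    refine hZ.inter (IsClosed.inter ?_ ?_)
    · exact isClosed_le hcoord.abs continuous_const
    · exact isClosed_le hScont continuous_const
  have hCsub : C ⊆ Metric.closedBall 0 (Real.sqrt R2) := by
    rintro z ⟨-, -, hzS⟩
    have h1 : ‖z.1‖ ≤ Real.sqrt R2 := by
      have := Real.sqrt_le_sqrt (show ‖z.1‖ ^ 2 ≤ R2 by nlinarith [sq_nonneg z.2])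
      rwa [Real.sqrt_sq (norm_nonneg z.1)] at this
    have h2 : |z.2| ≤ Real.sqrt R2 := by
      have := Real.sqrt_le_sqrt (show z.2 ^ 2 ≤ R2 by nlinarith [sq_nonneg ‖z.1‖])
      rwa [Real.sqrt_sq_eq_abs] at this
    rw [Metric.mem_closedBall, dist_zero_right, Prod.norm_def]
    exact max_le h1 h2
  have hCcompact : IsCompact C :=
    (isCompact_closedBall 0 (Real.sqrt R2)).of_isClosed_subset hCclosed hCsub
  have hqC : q ∈ C := by
    refine ⟨hqZ, ?_, by linarith [hqS']⟩
    have h1 : |q.1 jm| ≤ ‖q.1‖ := coord_abs_le_norm q.1 jm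
    have h2 : ‖q.1‖ ≤ 1 :=
      (pow_le_one_iff_of_nonneg (norm_nonneg q.1) two_ne_zero).mp
        (by nlinarith [sq_nonneg q.2, hqS'])
    linarith
  obtain ⟨p, hpC, hpmax⟩ := hCcompact.exists_isMaxOn ⟨q, hqC⟩
    (by
      have : Continuous (f 1) := by
        have hfe : f 1 = fun z => -z.2 + ⟪a, z.1⟫_ℝ +
            κ * ((z.1 jm) ^ 2 - 1 * (‖z.1‖ ^ 2 + z.2 ^ 2)) := funext (hf 1)
        rw [hfe]
        have hi : Continuous fun z : EuclideanSpace ℝ (Fin m) × ℝ =>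
            ⟪a, z.1⟫_ℝ := continuous_const.inner continuous_fst
        fun_prop
      exact this.continuousOn)
  have hfp : -(3 / 2) * A < f 1 p := lt_of_lt_of_le hfq (hpmax hqC)
  have hpZ : p ∈ Z := hpC.1
  have hpW : ⟪a, p.1⟫_ℝ + c * |p.1 jm| ≤ p.2 := by
    have := hZW hpZ; rw [hW] at this; exact this
  have hpmT : |p.1 jm| ≤ T := hpC.2.1
  have hpmlt : |p.1 jm| < T := by
    rcases lt_or_eq_of_le hpmT with h | h
    · exact h
    · exfalso
      have := partA 1 zero_le_one p (hZW hpZ) h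
      linarith
  have hpS : ‖p.1‖ ^ 2 + p.2 ^ 2 < R2 := by
    have hfp' : -(3 / 2) * A < -p.2 + ⟪a, p.1⟫_ℝ +
        κ * ((p.1 jm) ^ 2 - 1 * (‖p.1‖ ^ 2 + p.2 ^ 2)) := by
      rw [← hf 1 p]; exact hfp
    have hexp : κ * ((p.1 jm) ^ 2 - 1 * (‖p.1‖ ^ 2 + p.2 ^ 2)) =
        κ * (p.1 jm) ^ 2 - κ * (‖p.1‖ ^ 2 + p.2 ^ 2) := by ring
    have hsq : (p.1 jm) ^ 2 ≤ T ^ 2 := by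
      rw [← sq_abs]
      nlinarith [abs_nonneg (p.1 jm)]
    have habs : 0 ≤ c * |p.1 jm| := mul_nonneg hc.le (abs_nonneg _)
    have hκle : κ * (p.1 jm) ^ 2 ≤ κ * T ^ 2 :=
      mul_le_mul_of_nonneg_left hsq hκ0.le
    have hκSp : κ * (‖p.1‖ ^ 2 + p.2 ^ 2) < κ * R2 := by
      linarith [hpW, habs, hκle, hκT, hκR2, hfp', hexp, hA]
    exact lt_of_mul_lt_mul_left hκSp hκ0.le
  refine ⟨p, hpZ, ?_, hpmlt⟩
  have hUopen : IsOpen {z : EuclideanSpace ℝ (Fin m) × ℝ |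
      |z.1 jm| < T ∧ ‖z.1‖ ^ 2 + z.2 ^ 2 < R2} :=
    (isOpen_lt hcoord.abs continuous_const).inter (isOpen_lt hScont continuous_const)
  have hpU : p ∈ {z : EuclideanSpace ℝ (Fin m) × ℝ |
      |z.1 jm| < T ∧ ‖z.1‖ ^ 2 + z.2 ^ 2 < R2} := ⟨hpmlt, hpS⟩
  show ∀ᶠ x in nhdsWithin p Z, f 1 x ≤ f 1 p
  filter_upwards [mem_nhdsWithin_of_mem_nhds (hUopen.mem_nhds hpU),
    self_mem_nhdsWithin] with x hxU hxZ
  exact hpmax ⟨hxZ, hxU.1.le, hxU.2.le⟩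
end
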